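/- Let Z, H be nonnegative adapted continuous processes, ψ a nonnegative progressively measurable process, and M a continuous local martingale with M(0)=0, such that Z(t) ≤ ∫_0^t ψ(s)Z(s) ds + M(t) + H(t) for all t ≥ 0. Then with L(t) = ∫_0^t exp(−∫_0^s ψ(u) du) dM(s), one has Z(t) ≤ exp(∫_0^t ψ(s) ds) · (L(t) + H*(t)) for all t ≥ 0, where H*(t) = sup_{0 ≤ s ≤ t} H(s). -/

import Mathlib

open MeasureTheory ProbabilityTheory Filter NNReal intervalIntegral

open Set Topology


lemma sg_cov (g φ : ℝ → ℝ) (u : ℝ) (hu : 0 ≤ u)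
    (hg0 : ∀ s ∈ Set.Icc (0:ℝ) u, 0 ≤ g s)
    (hgi : IntegrableOn g (Set.Ioc 0 u) volume)
    (hφ : Continuous φ) :
    ∫ s in (0:ℝ)..u, g s * φ (∫ r in (0:ℝ)..s, g r)
      = ∫ x in (0:ℝ)..(∫ r in (0:ℝ)..u, g r), φ x := by
  set P : ℝ → ℝ := fun v => ∫ r in (0:ℝ)..v, g r with hP
  have hii : ∀ v ∈ Icc (0:ℝ) u, IntervalIntegrable g volume 0 v := fun v hv =>
    (intervalIntegrable_iff_integrableOn_Ioc_of_le hv.1).2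
      (hgi.mono_set (Ioc_subset_Ioc_right hv.2))
  have hP0 : P 0 = 0 := intervalIntegral.integral_same
  have hPnn : ∀ v ∈ Icc (0:ℝ) u, 0 ≤ P v := fun v hv =>
    intervalIntegral.integral_nonneg hv.1 fun s hs => hg0 s ⟨hs.1, hs.2.trans hv.2⟩
  have hPmono : ∀ v ∈ Icc (0:ℝ) u, ∀ w ∈ Icc (0:ℝ) u, v ≤ w → P v ≤ P w := by
    intro v hv w hw hvw
    have h1 : IntervalIntegrable g volume v w :=
      (intervalIntegrable_iff_integrableOn_Ioc_of_le hvw).2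
        (hgi.mono_set (Ioc_subset_Ioc hv.1 hw.2))
    have h2 : P w = P v + ∫ r in v..w, g r :=
      (intervalIntegral.integral_add_adjacent_intervals (hii v hv) h1).symm
    have h3 : 0 ≤ ∫ r in v..w, g r :=
      intervalIntegral.integral_nonneg hvw fun s hs => hg0 s ⟨hv.1.trans hs.1, hs.2.trans hw.2⟩
    linarith
  have hPcont : ContinuousOn P (Icc 0 u) := by
    have := intervalIntegral.continuousOn_primitive_interval
      (a := 0) (b := u) (f := g) (μ := volume) (by rwa [uIcc_of_le hu, integrableOn_Icc_iff_integrableOn_Ioc])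
    rwa [uIcc_of_le hu] at this
  set c : ℝ → ℝ := fun s => max 0 (min s u) with hc
  have hcmem : ∀ s, c s ∈ Icc (0:ℝ) u := fun s => ⟨le_max_left _ _, max_le hu (min_le_right _ _)⟩
  set Φ : ℝ → ℝ := fun s => P (c s) with hΦdef
  have hΦcont : Continuous Φ :=
    hPcont.comp_continuous (continuous_const.max (continuous_id.min continuous_const)) hcmem
  have hΦeq : ∀ s ∈ Icc (0:ℝ) u, Φ s = P s := by
    intro s hs
    simp only [hΦdef, hc, min_eq_left hs.2, max_eq_right hs.1]
  set ν : Measure ℝ :=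
    (volume.restrict (Ioc 0 u)).withDensity (fun s => ENNReal.ofReal (g s)) with hν
  haveI : IsFiniteMeasure ν := isFiniteMeasure_withDensity_ofReal hgi.2
  have hmap : Measure.map Φ ν = volume.restrict (Ioc 0 (P u)) := by
    refine Measure.ext_of_Iic _ _ (fun x => ?_)
    rw [Measure.map_apply hΦcont.measurable measurableSet_Iic, hν,
      withDensity_apply _ (hΦcont.measurable measurableSet_Iic),
      Measure.restrict_restrict (hΦcont.measurable measurableSet_Iic),
      Measure.restrict_apply measurableSet_Iic]
    rcases lt_or_ge x 0 with hx | hx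
    · have h1 : Φ ⁻¹' Iic x ∩ Ioc 0 u = ∅ := by
        ext s
        simp only [mem_inter_iff, mem_preimage, mem_Iic, mem_empty_iff_false, iff_false,
          not_and, mem_Ioc, and_imp]
        intro hsx h0s hsu
        have := hPnn s ⟨h0s.le, hsu⟩
        rw [hΦeq s ⟨h0s.le, hsu⟩] at hsx
        linarith
      have h2 : Iic x ∩ Ioc 0 (P u) = ∅ := by
        ext s
        simp only [mem_inter_iff, mem_Iic, mem_Ioc, mem_empty_iff_false, iff_false, not_and,
          and_imp]
        intro hsx h0s
        linarith
      simp [h1, h2]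
    · set T : Set ℝ := Icc 0 u ∩ Φ ⁻¹' (Iic x) with hT
      have hTclosed : IsClosed T := isClosed_Icc.inter (isClosed_Iic.preimage hΦcont)
      have hTne : T.Nonempty := ⟨0, ⟨le_rfl, hu⟩, by
        simp only [mem_preimage, mem_Iic, hΦeq 0 ⟨le_rfl, hu⟩, hP0]; exact hx⟩
      have hTbdd : BddAbove T := ((isCompact_Icc (a := (0:ℝ)) (b := u)).inter_right
        (isClosed_Iic.preimage hΦcont)).bddAbove
      set σ : ℝ := sSup T with hσ
      have hσT : σ ∈ T := hTclosed.csSup_mem hTne hTbdd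
      have hσIcc : σ ∈ Icc (0:ℝ) u := hσT.1
      have hσx : P σ ≤ x := by
        have := hσT.2; rwa [mem_preimage, mem_Iic, hΦeq σ hσIcc] at this
      have hpre : Φ ⁻¹' Iic x ∩ Ioc 0 u = Ioc 0 σ := by
        ext s
        simp only [mem_inter_iff, mem_preimage, mem_Iic, mem_Ioc]
        constructor
        · rintro ⟨hsx, h0s, hsu⟩
          exact ⟨h0s, le_csSup hTbdd ⟨⟨h0s.le, hsu⟩, by simpa [mem_preimage, mem_Iic] using hsx⟩⟩
        · rintro ⟨h0s, hsσ⟩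
          have hsIcc : s ∈ Icc (0:ℝ) u := ⟨h0s.le, hsσ.trans hσIcc.2⟩
          refine ⟨?_, h0s, hsIcc.2⟩
          rw [hΦeq s hsIcc]
          exact (hPmono s hsIcc σ hσIcc hsσ).trans hσx
      have hνval : ∫⁻ s in Φ ⁻¹' Iic x ∩ Ioc 0 u, ENNReal.ofReal (g s)
          = ENNReal.ofReal (P σ) := by
        rw [hpre, ← ofReal_integral_eq_lintegral_ofReal
          (hgi.mono_set (Ioc_subset_Ioc_right hσIcc.2))
          ((ae_restrict_iff' measurableSet_Ioc).2 (Filter.Eventually.of_forall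
            fun s hs => hg0 s ⟨hs.1.le, hs.2.trans hσIcc.2⟩))]
        congr 1
        rw [show P σ = ∫ r in (0:ℝ)..σ, g r from rfl, intervalIntegral.integral_of_le hσIcc.1]
      have hPσ : P σ = min x (P u) := by
        rcases eq_or_lt_of_le hσIcc.2 with heq | hlt
        · rw [heq, min_eq_right]
          rw [heq] at hσx; exact hσx
        · have hxle : x ≤ P σ := by
            have hev : ∀ s ∈ Ioc σ u, x ≤ P s := by
              intro s hs
              by_contra hcon
              push_neg at hcon
              have hsT : s ∈ T := ⟨⟨hσIcc.1.trans hs.1.le, hs.2⟩, by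
                rw [mem_preimage, mem_Iic, hΦeq s ⟨hσIcc.1.trans hs.1.le, hs.2⟩]
                exact hcon.le⟩
              exact absurd (le_csSup hTbdd hsT) (not_le.2 hs.1)
            have hNe : (𝓝[Ioc σ u] σ).NeBot := by
              rw [← mem_closure_iff_nhdsWithin_neBot, closure_Ioc hlt.ne]
              exact ⟨le_rfl, hlt.le⟩
            have htend : Tendsto P (𝓝[Ioc σ u] σ) (𝓝 (P σ)) :=
              (hPcont σ hσIcc).mono_left
                (nhdsWithin_mono _ (fun s hs => ⟨hσIcc.1.trans hs.1.le, hs.2⟩))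
            exact ge_of_tendsto htend (eventually_nhdsWithin_of_forall hev)
          rw [min_eq_left (hxle.trans (hPmono σ hσIcc u ⟨hu, le_rfl⟩ hσIcc.2))]
          exact le_antisymm hσx hxle
      rw [hνval, hPσ, Set.inter_comm, Set.Ioc_inter_Iic, Real.volume_Ioc, sub_zero, min_comm]
  have hgm : AEMeasurable (fun s => (g s).toNNReal) (volume.restrict (Ioc 0 u)) :=
    hgi.aemeasurable.real_toNNReal
  have h2 : ∫ x, φ x ∂(volume.restrict (Ioc 0 (P u))) = ∫ s, φ (Φ s) ∂ν := by
    rw [← hmap, integral_map hΦcont.measurable.aemeasurable hφ.aestronglyMeasurable]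
  have h3 : ∫ s, φ (Φ s) ∂ν = ∫ s in Ioc 0 u, (g s).toNNReal • φ (Φ s) := by
    rw [hν]
    exact integral_withDensity_eq_integral_smul₀ hgm _
  have h4 : ∫ s in Ioc 0 u, (g s).toNNReal • φ (Φ s) = ∫ s in Ioc 0 u, g s * φ (P s) := by
    refine setIntegral_congr_fun measurableSet_Ioc (fun s hs => ?_)
    rw [hΦeq s ⟨hs.1.le, hs.2⟩, NNReal.smul_def, Real.coe_toNNReal _ (hg0 s ⟨hs.1.le, hs.2⟩), smul_eq_mul]
  rw [intervalIntegral.integral_of_le hu, intervalIntegral.integral_of_le (hPnn u ⟨hu, le_rfl⟩)]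
  rw [h2, h3, h4]


lemma sg_swap (q w : ℝ → ℝ) (u : ℝ) (hu : 0 ≤ u)
    (hq : IntegrableOn q (Set.Ioc 0 u) volume) (hw : IntegrableOn w (Set.Ioc 0 u) volume) :
    ∫ r in Set.Ioc (0:ℝ) u, q r * (∫ s in Set.Ioc (0:ℝ) r, w s)
      = ∫ s in Set.Ioc (0:ℝ) u, w s * (∫ r in Set.Ioc s u, q r) := by
  set μ := volume.restrict (Set.Ioc (0:ℝ) u) with hμ
  set F : ℝ → ℝ → ℝ := fun r s => if s ≤ r then q r * w s else 0 with hF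
  have hFind : Function.uncurry F = Set.indicator {p : ℝ × ℝ | p.2 ≤ p.1}
      (fun p => q p.1 * w p.2) := by
    ext p
    by_cases h : p.2 ≤ p.1 <;> simp [hF, Function.uncurry, Set.indicator, h]
  have hFint : Integrable (Function.uncurry F) (μ.prod μ) := by
    rw [hFind]
    exact (hq.mul_prod hw).indicator (measurableSet_le measurable_snd measurable_fst)
  have hL : ∀ r ∈ Set.Ioc (0:ℝ) u, q r * (∫ s in Set.Ioc (0:ℝ) r, w s) = ∫ s, F r s ∂μ := by
    intro r hr
    have h1 : (fun s => F r s) = Set.indicator (Set.Iic r) (fun s => q r * w s) := by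
      ext s
      by_cases h : s ≤ r <;> simp [hF, Set.indicator, h]
    rw [h1, MeasureTheory.integral_indicator measurableSet_Iic, hμ, Measure.restrict_restrict measurableSet_Iic,
      Set.inter_comm, Set.Ioc_inter_Iic, min_eq_right hr.2, MeasureTheory.integral_const_mul]
  have hR : ∀ s ∈ Set.Ioc (0:ℝ) u, (∫ r, F r s ∂μ) = w s * (∫ r in Set.Ioc s u, q r) := by
    intro s hs
    have h1 : (fun r => F r s) = Set.indicator (Set.Ici s) (fun r => q r * w s) := by
      ext r
      by_cases h : s ≤ r <;> simp [hF, Set.indicator, h]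
    have h2 : Set.Ici s ∩ Set.Ioc 0 u = Set.Icc s u := by
      ext r
      simp only [Set.mem_inter_iff, Set.mem_Ici, Set.mem_Ioc, Set.mem_Icc]
      constructor
      · rintro ⟨h1', h2', h3'⟩; exact ⟨h1', h3'⟩
      · rintro ⟨h1', h2'⟩; exact ⟨h1', hs.1.trans_le h1', h2'⟩
    rw [h1, MeasureTheory.integral_indicator measurableSet_Ici, hμ, Measure.restrict_restrict measurableSet_Ici,
      h2, integral_Icc_eq_integral_Ioc, MeasureTheory.integral_mul_const, mul_comm]
  calc ∫ r in Set.Ioc (0:ℝ) u, q r * (∫ s in Set.Ioc (0:ℝ) r, w s)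
      = ∫ r, ∫ s, F r s ∂μ ∂μ := by
        have : ∀ r ∈ Set.Ioc (0:ℝ) u, ∫ s in Set.Ioc (0:ℝ) r, w s = ∫ s in Set.Iic r, w s ∂μ := by
          intro r hr
          rw [hμ, Measure.restrict_restrict measurableSet_Iic, Set.inter_comm,
            Set.Ioc_inter_Iic, min_eq_right hr.2]
        refine setIntegral_congr_fun measurableSet_Ioc (fun r hr => ?_)
        rw [hL r hr]
    _ = ∫ s, ∫ r, F r s ∂μ ∂μ := integral_integral_swap hFint
    _ = ∫ s in Set.Ioc (0:ℝ) u, w s * (∫ r in Set.Ioc s u, q r) :=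
        setIntegral_congr_fun measurableSet_Ioc (fun s hs => hR s hs)
noncomputable def sgP (g : ℝ → ℝ) (v : ℝ) : ℝ := ∫ r in (0:ℝ)..v, g r

noncomputable def sgA (g m : ℝ → ℝ) (v : ℝ) : ℝ :=
  ∫ s in (0:ℝ)..v, g s * Real.exp (-sgP g s) * m s

lemma sg_gronwall (g m h f : ℝ → ℝ) (t : ℝ) (ht : 0 ≤ t)
    (hg0 : ∀ s, 0 ≤ s → 0 ≤ g s)
    (hgi : ∀ v, 0 ≤ v → IntervalIntegrable g volume 0 v)
    (hm : Continuous m) (hh : Continuous h) (hf : Continuous f)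
    (hh0 : ∀ s, 0 ≤ s → 0 ≤ h s)
    (hint : ∀ v, 0 ≤ v → f v ≤ (∫ s in (0:ℝ)..v, g s * f s) + m v + h v) :
    f t ≤ Real.exp (sgP g t) *
      ((Real.exp (-sgP g t) * m t + sgA g m t) + ⨆ s : Set.Icc (0:ℝ) t, h (s : ℝ)) := by
  have hIoc : ∀ v, 0 ≤ v → IntegrableOn g (Set.Ioc 0 v) volume := fun v hv =>
    (intervalIntegrable_iff_integrableOn_Ioc_of_le hv).1 (hgi v hv)
  have hsub : ∀ v w : ℝ, 0 ≤ v → v ≤ w → IntervalIntegrable g volume v w := by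
    intro v w hv hvw
    refine (hgi w (hv.trans hvw)).mono_set (uIcc_subset_uIcc ?_ ?_) <;>
      rw [uIcc_of_le (hv.trans hvw)]
    · exact ⟨hv, hvw⟩
    · exact ⟨hv.trans hvw, le_rfl⟩
  have hPnn : ∀ v, 0 ≤ v → 0 ≤ sgP g v := fun v hv =>
    intervalIntegral.integral_nonneg hv fun s hs => hg0 s hs.1
  have hPmono : ∀ v w : ℝ, 0 ≤ v → v ≤ w → sgP g v ≤ sgP g w := by
    intro v w hv hvw
    have h2 : sgP g w = sgP g v + ∫ r in v..w, g r :=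
      (intervalIntegral.integral_add_adjacent_intervals (hgi v hv) (hsub v w hv hvw)).symm
    have h3 : 0 ≤ ∫ r in v..w, g r :=
      intervalIntegral.integral_nonneg hvw fun s hs => hg0 s (hv.trans hs.1)
    linarith
  have hPcont : ContinuousOn (sgP g) (Icc 0 t) := by
    show ContinuousOn (fun v => ∫ r in (0:ℝ)..v, g r) (Icc 0 t)
    have := intervalIntegral.continuousOn_primitive_interval
      (a := 0) (b := t) (f := g) (μ := volume)
      (by rw [uIcc_of_le ht, integrableOn_Icc_iff_integrableOn_Ioc]; exact hIoc t ht)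
    rwa [uIcc_of_le ht] at this
  -- change of variables identities
  have hexp : ∀ v, 0 ≤ v →
      (∫ s in (0:ℝ)..v, g s * Real.exp (sgP g s)) = Real.exp (sgP g v) - 1 := by
    intro v hv
    have hc := sg_cov g Real.exp v hv (fun s hs => hg0 s hs.1) (hIoc v hv) Real.continuous_exp
    rw [integral_exp, Real.exp_zero] at hc
    simpa [sgP] using hc
  have hpow : ∀ (n : ℕ) (v : ℝ), 0 ≤ v →
      (∫ s in (0:ℝ)..v, g s * sgP g s ^ n)
        = sgP g v ^ (n + 1) / ((n : ℝ) + 1) := by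
    intro n v hv
    have hc := sg_cov g (fun x => x ^ n) v hv (fun s hs => hg0 s hs.1) (hIoc v hv)
      (continuous_pow n)
    rw [integral_pow] at hc
    simpa [sgP] using hc
  -- integrability of various products
  have hIcs : ∀ v : ℝ, v ≤ t → Icc (0:ℝ) v ⊆ Icc 0 t := fun v hv =>
    Icc_subset_Icc le_rfl hv
  have hexpPc : ContinuousOn (fun s => Real.exp (sgP g s)) (Icc 0 t) :=
    Real.continuous_exp.comp_continuousOn hPcont
  have hexpNc : ContinuousOn (fun s => Real.exp (-sgP g s)) (Icc 0 t) :=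
    Real.continuous_exp.comp_continuousOn hPcont.neg
  have iGM : ∀ v ∈ Icc (0:ℝ) t, IntervalIntegrable (fun s => g s * m s) volume 0 v :=
    fun v hv => (hgi v hv.1).mul_continuousOn
      (by rw [uIcc_of_le hv.1]; exact hm.continuousOn)
  have iGE : ∀ v ∈ Icc (0:ℝ) t,
      IntervalIntegrable (fun s => g s * Real.exp (sgP g s)) volume 0 v :=
    fun v hv => (hgi v hv.1).mul_continuousOn
      (by rw [uIcc_of_le hv.1]; exact hexpPc.mono (hIcs v hv.2))
  have iW : ∀ v ∈ Icc (0:ℝ) t,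
      IntervalIntegrable (fun s => g s * Real.exp (-sgP g s) * m s) volume 0 v := by
    intro v hv
    refine ((hgi v hv.1).mul_continuousOn
      (by rw [uIcc_of_le hv.1]; exact hexpNc.mono (hIcs v hv.2))).mul_continuousOn ?_
    rw [uIcc_of_le hv.1]; exact hm.continuousOn
  have hAcont : ContinuousOn (sgA g m) (Icc 0 t) := by
    show ContinuousOn (fun v => ∫ s in (0:ℝ)..v, g s * Real.exp (-sgP g s) * m s) (Icc 0 t)
    have := intervalIntegral.continuousOn_primitive_interval
      (a := 0) (b := t) (f := fun s => g s * Real.exp (-sgP g s) * m s) (μ := volume)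
      (by rw [uIcc_of_le ht, integrableOn_Icc_iff_integrableOn_Ioc]
          exact (intervalIntegrable_iff_integrableOn_Ioc_of_le ht).1 (iW t ⟨ht, le_rfl⟩))
    rwa [uIcc_of_le ht] at this
  have iGEA : ∀ v ∈ Icc (0:ℝ) t,
      IntervalIntegrable (fun s => g s * Real.exp (sgP g s) * sgA g m s) volume 0 v :=
    fun v hv => (iGE v hv).mul_continuousOn
      (by rw [uIcc_of_le hv.1]; exact hAcont.mono (hIcs v hv.2))
  have iGPn : ∀ (n : ℕ), ∀ v ∈ Icc (0:ℝ) t,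
      IntervalIntegrable (fun s => g s * sgP g s ^ n) volume 0 v :=
    fun n v hv => (hgi v hv.1).mul_continuousOn
      (by rw [uIcc_of_le hv.1]; exact ((hPcont.mono (hIcs v hv.2)).pow n))
  -- the integration-by-parts (Fubini) identity
  have hFI : ∀ v ∈ Icc (0:ℝ) t,
      (∫ r in (0:ℝ)..v, g r * Real.exp (sgP g r) * sgA g m r)
        = Real.exp (sgP g v) * sgA g m v - ∫ r in (0:ℝ)..v, g r * m r := by
    intro v hv
    obtain ⟨hv0, hvt⟩ := hv
    set w : ℝ → ℝ := fun s => g s * Real.exp (-sgP g s) * m s with hw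
    have hqIoc : IntegrableOn (fun r => g r * Real.exp (sgP g r)) (Set.Ioc 0 v) volume :=
      (intervalIntegrable_iff_integrableOn_Ioc_of_le hv0).1 (iGE v ⟨hv0, hvt⟩)
    have hwIoc : IntegrableOn w (Set.Ioc 0 v) volume :=
      (intervalIntegrable_iff_integrableOn_Ioc_of_le hv0).1 (iW v ⟨hv0, hvt⟩)
    have hswap := sg_swap (fun r => g r * Real.exp (sgP g r)) w v hv0 hqIoc hwIoc
    have hL : (∫ r in (0:ℝ)..v, g r * Real.exp (sgP g r) * sgA g m r)
        = ∫ r in Set.Ioc (0:ℝ) v, g r * Real.exp (sgP g r) * (∫ s in Set.Ioc (0:ℝ) r, w s) := by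
      rw [intervalIntegral.integral_of_le hv0]
      refine setIntegral_congr_fun measurableSet_Ioc (fun r hr => ?_)
      have : sgA g m r = ∫ s in Set.Ioc (0:ℝ) r, w s := by
        rw [sgA, intervalIntegral.integral_of_le hr.1.le]
      rw [this]
    have hinner : ∀ s ∈ Set.Ioc (0:ℝ) v,
        (∫ r in Set.Ioc s v, g r * Real.exp (sgP g r))
          = Real.exp (sgP g v) - Real.exp (sgP g s) := by
      intro s hs
      rw [← intervalIntegral.integral_of_le hs.2,
        ← intervalIntegral.integral_interval_sub_left (iGE v ⟨hv0, hvt⟩)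
          (iGE s ⟨hs.1.le, hs.2.trans hvt⟩),
        hexp v hv0, hexp s hs.1.le]
      ring
    have hR : (∫ s in Set.Ioc (0:ℝ) v, w s * (∫ r in Set.Ioc s v, g r * Real.exp (sgP g r)))
        = Real.exp (sgP g v) * sgA g m v - ∫ r in (0:ℝ)..v, g r * m r := by
      have e1 : (∫ s in Set.Ioc (0:ℝ) v, w s * (∫ r in Set.Ioc s v, g r * Real.exp (sgP g r)))
          = ∫ s in Set.Ioc (0:ℝ) v, (Real.exp (sgP g v) * w s - g s * m s) := by
        refine setIntegral_congr_fun measurableSet_Ioc (fun s hs => ?_)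
        rw [hinner s hs]
        have hx : Real.exp (-sgP g s) * Real.exp (sgP g s) = 1 := by
          rw [← Real.exp_add, neg_add_cancel, Real.exp_zero]
        simp only [hw]
        linear_combination (-(g s * m s)) * hx
      rw [e1, integral_sub ((hwIoc.const_mul (Real.exp (sgP g v))))
        ((intervalIntegrable_iff_integrableOn_Ioc_of_le hv0).1 (iGM v ⟨hv0, hvt⟩)),
        MeasureTheory.integral_const_mul]
      congr 1
      · congr 1
        rw [sgA, intervalIntegral.integral_of_le hv0]
      · rw [intervalIntegral.integral_of_le hv0]
    rw [hL, hswap, hR]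
  -- the supremum of h on [0, t]
  set hstar : ℝ := ⨆ s : Set.Icc (0:ℝ) t, h (s : ℝ) with hhstar
  haveI : Nonempty (Set.Icc (0:ℝ) t) := ⟨⟨0, le_rfl, ht⟩⟩
  have hbdd : BddAbove (Set.range fun s : Set.Icc (0:ℝ) t => h (s : ℝ)) := by
    rw [← Set.image_eq_range]
    exact (isCompact_Icc.image_of_continuousOn hh.continuousOn).bddAbove
  have hHle : ∀ r ∈ Icc (0:ℝ) t, h r ≤ hstar := fun r hr => le_ciSup hbdd ⟨r, hr⟩
  have hstar0 : 0 ≤ hstar := (hh0 0 le_rfl).trans (hHle 0 ⟨le_rfl, ht⟩)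
  -- the constant D
  obtain ⟨xm, hxm, hxmax⟩ := isCompact_Icc.exists_isMaxOn (Set.nonempty_Icc.2 ht)
    (f := fun v => f v - m v - Real.exp (sgP g v) * sgA g m v - hstar * Real.exp (sgP g v))
    (((hf.continuousOn.sub hm.continuousOn).sub (hexpPc.mul hAcont)).sub
      (continuousOn_const.mul hexpPc))
  set D : ℝ := max (f xm - m xm - Real.exp (sgP g xm) * sgA g m xm
    - hstar * Real.exp (sgP g xm)) 0 with hD
  have hDle : ∀ v ∈ Icc (0:ℝ) t,
      f v - m v - Real.exp (sgP g v) * sgA g m v - hstar * Real.exp (sgP g v) ≤ D :=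
    fun v hv => (hxmax hv).trans (le_max_left _ _)
  have hD0 : (0:ℝ) ≤ D := le_max_right _ _
  -- the key induction
  have key : ∀ n : ℕ, ∀ v ∈ Icc (0:ℝ) t,
      f v ≤ m v + Real.exp (sgP g v) * sgA g m v + hstar * Real.exp (sgP g v)
        + D * (sgP g v ^ n / (n.factorial : ℝ)) := by
    intro n
    induction n with
    | zero =>
      intro v hv
      have := hDle v hv
      simp only [pow_zero, Nat.factorial_zero, Nat.cast_one, div_one, mul_one]
      linarith
    | succ n ih =>
      intro v hv
      obtain ⟨hv0, hvt⟩ := hv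
      set B : ℝ → ℝ := fun s => g s * m s + g s * Real.exp (sgP g s) * sgA g m s
        + hstar * (g s * Real.exp (sgP g s)) + D / (n.factorial : ℝ) * (g s * sgP g s ^ n)
        with hB
      have hBint : IntervalIntegrable B volume 0 v :=
        (((iGM v ⟨hv0, hvt⟩).add (iGEA v ⟨hv0, hvt⟩)).add
          ((iGE v ⟨hv0, hvt⟩).const_mul hstar)).add
          ((iGPn n v ⟨hv0, hvt⟩).const_mul (D / (n.factorial : ℝ)))
      have hgfint : IntervalIntegrable (fun s => g s * f s) volume 0 v :=
        (hgi v hv0).mul_continuousOn (by rw [uIcc_of_le hv0]; exact hf.continuousOn)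
      have hmono : (∫ s in (0:ℝ)..v, g s * f s) ≤ ∫ s in (0:ℝ)..v, B s := by
        refine intervalIntegral.integral_mono_on hv0 hgfint hBint (fun s hs => ?_)
        have hfs := ih s ⟨hs.1, hs.2.trans hvt⟩
        have hg0s := hg0 s hs.1
        calc g s * f s ≤ g s * (m s + Real.exp (sgP g s) * sgA g m s
              + hstar * Real.exp (sgP g s) + D * (sgP g s ^ n / (n.factorial : ℝ))) :=
            mul_le_mul_of_nonneg_left hfs hg0s
          _ = B s := by rw [hB]; ring
      have hBval : (∫ s in (0:ℝ)..v, B s)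
          = (∫ s in (0:ℝ)..v, g s * m s)
            + (∫ s in (0:ℝ)..v, g s * Real.exp (sgP g s) * sgA g m s)
            + hstar * (Real.exp (sgP g v) - 1)
            + D / (n.factorial : ℝ) * (sgP g v ^ (n + 1) / ((n : ℝ) + 1)) := by
        rw [hB]
        rw [intervalIntegral.integral_add (((iGM v ⟨hv0, hvt⟩).add (iGEA v ⟨hv0, hvt⟩)).add
            ((iGE v ⟨hv0, hvt⟩).const_mul hstar))
            ((iGPn n v ⟨hv0, hvt⟩).const_mul (D / (n.factorial : ℝ))),
          intervalIntegral.integral_add ((iGM v ⟨hv0, hvt⟩).add (iGEA v ⟨hv0, hvt⟩))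
            ((iGE v ⟨hv0, hvt⟩).const_mul hstar),
          intervalIntegral.integral_add (iGM v ⟨hv0, hvt⟩) (iGEA v ⟨hv0, hvt⟩),
          intervalIntegral.integral_const_mul, intervalIntegral.integral_const_mul,
          hexp v hv0, hpow n v hv0]
      have hfv := hint v hv0
      have hhv := hHle v ⟨hv0, hvt⟩
      have hFIv := hFI v ⟨hv0, hvt⟩
      have hfact : D / (n.factorial : ℝ) * (sgP g v ^ (n + 1) / ((n : ℝ) + 1))
          = D * (sgP g v ^ (n + 1) / ((n + 1).factorial : ℝ)) := by
        have h1 : ((n.factorial : ℝ)) ≠ 0 := Nat.cast_ne_zero.2 n.factorial_ne_zero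
        have h2 : ((n : ℝ) + 1) ≠ 0 := by positivity
        rw [show (((n + 1).factorial : ℝ)) = ((n : ℝ) + 1) * (n.factorial : ℝ) by
          rw [Nat.factorial_succ]; push_cast; ring]
        field_simp
        try exact Or.inl trivial
      linarith
  -- pass to the limit
  have hten : Tendsto (fun n : ℕ => sgP g t ^ n / (n.factorial : ℝ)) atTop (𝓝 0) :=
    FloorSemiring.tendsto_pow_div_factorial_atTop (sgP g t)
  have htend : Tendsto (fun n : ℕ => m t + Real.exp (sgP g t) * sgA g m t
      + hstar * Real.exp (sgP g t) + D * (sgP g t ^ n / (n.factorial : ℝ))) atTop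
      (𝓝 (m t + Real.exp (sgP g t) * sgA g m t + hstar * Real.exp (sgP g t) + D * 0)) :=
    Tendsto.const_add _ (hten.const_mul D)
  have hle : f t ≤ m t + Real.exp (sgP g t) * sgA g m t + hstar * Real.exp (sgP g t)
      + D * 0 :=
    ge_of_tendsto htend (Eventually.of_forall fun n => by
      have := key n t ⟨ht, le_rfl⟩
      linarith)
  have hexp1 : Real.exp (sgP g t) * Real.exp (-sgP g t) = 1 := by
    rw [← Real.exp_add, add_neg_cancel, Real.exp_zero]
  have hfin : Real.exp (sgP g t) * ((Real.exp (-sgP g t) * m t + sgA g m t) + hstar)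
      = m t + Real.exp (sgP g t) * sgA g m t + hstar * Real.exp (sgP g t) := by
    linear_combination m t * hexp1
  rw [hfin]
  linarith


noncomputable def cConst (p : ℝ) : ℝ :=
  min 4 (1 / p) * (Real.pi * p / Real.sin (Real.pi * p))

/-- A continuous local martingale indexed by `ℝ`, via a localizing sequence of
stopping times. -/
def IsContLocalMartingale {Ω : Type*} {m0 : MeasurableSpace Ω}
    (ℱ : Filtration ℝ m0) (μ : Measure Ω) (M : ℝ → Ω → ℝ) : Prop :=
  (∀ ω, Continuous fun t => M t ω) ∧ Adapted ℱ M ∧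
  ∃ τ : ℕ → Ω → ℝ, (∀ n, IsStoppingTime ℱ (fun ω => ((τ n ω : ℝ) : WithTop ℝ))) ∧
    (∀ ω, Tendsto (fun n => τ n ω) atTop atTop) ∧
    ∀ n, Martingale (fun t ω => M (min t (τ n ω)) ω) ℱ μ

/-- pathwise Gronwall step: under the stochastic Gronwall
hypotheses, with `L t = ∫_0^t exp(−∫_0^s ψ) dM` (written via its pathwise
integration-by-parts formula
`L t = exp(−Ψ t)·M t + ∫_0^t ψ s · exp(−Ψ s) · M s ds`, `Ψ t = ∫_0^t ψ`),
one has `Z t ≤ exp(∫_0^t ψ) · (L t + H*(t))` for all `t ≥ 0`. -/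
theorem stochastic_gronwall_pathwise
    {Ω : Type*} {m0 : MeasurableSpace Ω} (μ : Measure Ω) [IsProbabilityMeasure μ]
    (ℱ : Filtration ℝ m0) (Z H : ℝ → Ω → ℝ) (ψ : ℝ → Ω → ℝ) (M : ℝ → Ω → ℝ)
    (hZcont : ∀ ω, Continuous fun t => Z t ω)
    (hHcont : ∀ ω, Continuous fun t => H t ω)
    (hZ0 : ∀ t ω, 0 ≤ t → 0 ≤ Z t ω) (hH0 : ∀ t ω, 0 ≤ t → 0 ≤ H t ω)
    (hZadp : Adapted ℱ Z) (hHadp : Adapted ℱ H)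
    (hψ0 : ∀ t ω, 0 ≤ t → 0 ≤ ψ t ω) (hψprog : ProgMeasurable ℱ ψ)
    (hψint : ∀ ω t, 0 ≤ t → IntervalIntegrable (fun s => ψ s ω) volume 0 t)
    (hM : IsContLocalMartingale ℱ μ M)
    (hM0 : ∀ ω, M 0 ω = 0)
    (hGron : ∀ t ω, 0 ≤ t →
      Z t ω ≤ (∫ s in (0 : ℝ)..t, ψ s ω * Z s ω) + M t ω + H t ω) :
    ∀ t ω, 0 ≤ t →
      Z t ω ≤ Real.exp (∫ s in (0 : ℝ)..t, ψ s ω) *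
        ((Real.exp (-(∫ s in (0 : ℝ)..t, ψ s ω)) * M t ω +
            ∫ s in (0 : ℝ)..t,
              ψ s ω * Real.exp (-(∫ u in (0 : ℝ)..s, ψ u ω)) * M s ω) +
          ⨆ s : Set.Icc (0 : ℝ) t, H (s : ℝ) ω) := by
  intro t ω ht
  have h := sg_gronwall (fun s => ψ s ω) (fun s => M s ω) (fun s => H s ω) (fun s => Z s ω)
    t ht (fun s hs => hψ0 s ω hs) (fun v hv => hψint ω v hv) (hM.1 ω) (hHcont ω) (hZcont ω)
    (fun s hs => hH0 s ω hs) (fun v hv => hGron v ω hv)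
  simpa [sgP, sgA] using h
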